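/- If X is a minimal G-flow, the canonical map π_X : S_G(X) → X is highly proximal: every nonempty open subset of S_G(X) contains a fiber π_X⁻¹({x}) for some x ∈ X. -/

import Mathlib

open Pointwise

/-- A near filter on the open sets of a `G`-flow `X`: a family of nonempty open
subsets such that finite intersections of `U`-thickenings of its members are
nonempty, for every symmetric open neighborhood `U` of the identity. -/
def IsNearFilter (G : Type*) {X : Type*} [Group G] [TopologicalSpace G]
    [TopologicalSpace X] [MulAction G X] (F : Set (Set X)) : Prop :=
  (∀ A ∈ F, IsOpen A ∧ A.Nonempty) ∧
  ∀ s : Finset (Set X), s.Nonempty → ↑s ⊆ F →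
    ∀ U : Set G, IsOpen U → (1 : G) ∈ U → U⁻¹ = U →
      (⋂ A ∈ s, U • A).Nonempty

/-- A near ultrafilter is a maximal near filter. -/
def IsNearUltrafilter (G : Type*) {X : Type*} [Group G] [TopologicalSpace G]
    [TopologicalSpace X] [MulAction G X] (F : Set (Set X)) : Prop :=
  IsNearFilter G F ∧ ∀ F' : Set (Set X), IsNearFilter G F' → F ⊆ F' → F' ⊆ F

/-- The space `S_G(X)` of near ultrafilters on `X`. -/
def NearUltra (G X : Type*) [Group G] [TopologicalSpace G]
    [TopologicalSpace X] [MulAction G X] : Type _ :=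
  {F : Set (Set X) // IsNearUltrafilter G F}

/-- The topology on `S_G(X)` generated by the sets `N_A = {p | A ∉ p}`
for `A` a nonempty open subset of `X`. -/
def nearTopology (G X : Type*) [Group G] [TopologicalSpace G]
    [TopologicalSpace X] [MulAction G X] : TopologicalSpace (NearUltra G X) :=
  TopologicalSpace.generateFrom
    {N | ∃ A : Set X, IsOpen A ∧ A.Nonempty ∧ N = {p : NearUltra G X | A ∉ p.1}}

/-!
A basic neighbourhood of `p` in `S_G(X)` is `⋂_{A ∈ T} N_A` for a finite family `T` of open
sets none of which lies in `p`. Near ultrafilters contain every dense open set and no finite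
union of non-members, so `⋃ T` is not dense: some `x` has an open neighbourhood `V` whose
closure misses `closure (⋃ T)`. Every `q` over `x` contains `V`, and by compactness `V` and each
`A ∈ T` stay disjoint after thickening by a small symmetric neighbourhood of `1`. Hence no `q`
over `x` contains a member of `T`, and the fiber over `x` lies in the neighbourhood.
-/

open Set Topology

section SymmOpenNhd

variable {G : Type*} [Group G] [TopologicalSpace G]

def IsSymmOpenNhdOne (U : Set G) : Prop :=
  IsOpen U ∧ (1 : G) ∈ U ∧ U⁻¹ = U

theorem isSymmOpenNhdOne_inter_inv [ContinuousInv G] {W : Set G} (hW : IsOpen W)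
    (h1 : (1 : G) ∈ W) : IsSymmOpenNhdOne (W ∩ W⁻¹) :=
  ⟨hW.inter hW.inv, ⟨h1, by simpa using h1⟩, by rw [inter_inv, inv_inv, inter_comm]⟩

theorem IsSymmOpenNhdOne.biInter_finset {ι : Type*} {T : Finset ι} {U : ι → Set G}
    (hU : ∀ i ∈ T, IsSymmOpenNhdOne (U i)) : IsSymmOpenNhdOne (⋂ i ∈ T, U i) :=
  ⟨isOpen_biInter_finset fun i hi => (hU i hi).1, mem_iInter₂.mpr fun i hi => (hU i hi).2.1,
    by simp only [iInter_inv]; exact iInter₂_congr fun i hi => (hU i hi).2.2⟩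

end SymmOpenNhd

theorem exists_isSymmOpenNhdOne_disjoint_smul {G X : Type*} [Group G] [TopologicalSpace G]
    [IsTopologicalGroup G] [TopologicalSpace X] [MulAction G X] [ContinuousSMul G X]
    {K C : Set X} (hK : IsCompact K) (hC : IsClosed C) (hKC : Disjoint K C) :
    ∃ U : Set G, IsSymmOpenNhdOne U ∧ Disjoint (U • C) (U • K) := by
  obtain ⟨u, v, hu, -, h1u, hKv, huv⟩ :=
    generalized_tube_lemma (isCompact_singleton (x := (1 : G))) hK
      (hC.isOpen_compl.preimage continuous_smul) <| by
      rintro ⟨g, x⟩ ⟨rfl, hx⟩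
      simpa only [mem_preimage, mem_compl_iff, one_smul] using disjoint_left.mp hKC hx
  obtain ⟨W, hW, h1W, hWW⟩ := exists_open_nhds_one_mul_subset (hu.mem_nhds (h1u rfl))
  refine ⟨W ∩ W⁻¹, isSymmOpenNhdOne_inter_inv hW h1W, disjoint_left.mpr ?_⟩
  rintro _ ⟨g, hg, c, hc, rfl⟩ ⟨h, hh, k, hk, hgc⟩
  -- `g • c = h • k` exhibits `c = (g⁻¹ * h) • k` with `g⁻¹ * h ∈ u` and `k ∈ v`.
  have hc' : (g⁻¹ * h) • k = c := by
    simp only at hgc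
    rw [mul_smul, hgc, inv_smul_smul]
  exact huv (mk_mem_prod (hWW (mul_mem_mul hg.2 hh.1)) (hKv hk))
    (show (g⁻¹ * h) • k ∈ C from hc' ▸ hc)

section NearFilter

variable {G X : Type*} [Group G] [TopologicalSpace G] [TopologicalSpace X] [MulAction G X]
  {F : Set (Set X)}

theorem IsNearFilter.nonempty_biInter_smul [Nonempty X] (hF : IsNearFilter G F)
    {s : Finset (Set X)} (hs : ↑s ⊆ F) {U : Set G} (hU : IsSymmOpenNhdOne U) :
    (⋂ B ∈ s, U • B).Nonempty := by
  rcases s.eq_empty_or_nonempty with rfl | hne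
  · simp
  · exact hF.2 s hne hs U hU.1 hU.2.1 hU.2.2

theorem IsNearFilter.notMem_of_disjoint_smul (hF : IsNearFilter G F) {V A : Set X} (hV : V ∈ F)
    {U : Set G} (hU : IsSymmOpenNhdOne U) (hd : Disjoint (U • V) (U • A)) : A ∉ F := by
  classical
  intro hA
  obtain ⟨y, hy⟩ := hF.2 {V, A} (Finset.insert_nonempty _ _)
    (by simp [insert_subset_iff, hV, hA]) U hU.1 hU.2.1 hU.2.2
  simp only [Finset.mem_insert, Finset.mem_singleton, iInter_iInter_eq_or_left,
    iInter_iInter_eq_left, mem_inter_iff] at hy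
  exact disjoint_left.mp hd hy.1 hy.2

theorem IsNearFilter.insert {A : Set X} (hF : IsNearFilter G F) (hA : IsOpen A)
    (hne : A.Nonempty)
    (h : ∀ s : Finset (Set X), ↑s ⊆ F → ∀ U : Set G, IsSymmOpenNhdOne U →
      (U • A ∩ ⋂ B ∈ s, U • B).Nonempty) :
    IsNearFilter G (insert A F) := by
  classical
  refine ⟨?_, fun s _ hs U hUo hU1 hUs => ?_⟩
  · rintro B (rfl | hB)
    exacts [⟨hA, hne⟩, hF.1 B hB]
  have herase : ↑(s.erase A) ⊆ F := fun B hB =>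
    (hs (Finset.mem_of_mem_erase hB)).resolve_left (Finset.ne_of_mem_erase hB)
  refine (h _ herase U ⟨hUo, hU1, hUs⟩).mono fun y hy => mem_iInter₂.mpr fun B hB => ?_
  rcases eq_or_ne B A with rfl | hBA
  · exact hy.1
  · exact mem_iInter₂.mp hy.2 B (Finset.mem_erase.mpr ⟨hBA, hB⟩)

end NearFilter

namespace IsNearUltrafilter

variable {G X : Type*} [Group G] [TopologicalSpace G] [TopologicalSpace X] [MulAction G X]
  {p : Set (Set X)}

theorem mem_of_forall_nonempty (hp : IsNearUltrafilter G p) {A : Set X} (hA : IsOpen A)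
    (hne : A.Nonempty)
    (h : ∀ s : Finset (Set X), ↑s ⊆ p → ∀ U : Set G, IsSymmOpenNhdOne U →
      (U • A ∩ ⋂ B ∈ s, U • B).Nonempty) : A ∈ p :=
  hp.2 _ (hp.1.insert hA hne h) (subset_insert _ _) (mem_insert _ _)

theorem exists_inter_eq_empty_of_notMem (hp : IsNearUltrafilter G p) {A : Set X}
    (hA : IsOpen A) (hne : A.Nonempty) (hAp : A ∉ p) :
    ∃ s : Finset (Set X), ↑s ⊆ p ∧ ∃ U : Set G, IsSymmOpenNhdOne U ∧
      U • A ∩ ⋂ B ∈ s, U • B = ∅ := by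
  by_contra! h
  exact hAp (hp.mem_of_forall_nonempty hA hne h)

theorem mem_of_dense [ContinuousConstSMul G X] [Nonempty X] (hp : IsNearUltrafilter G p)
    {A : Set X} (hA : IsOpen A) (hd : Dense A) : A ∈ p := by
  refine hp.mem_of_forall_nonempty hA hd.nonempty fun s hs U hU => ?_
  have hopen : IsOpen (⋂ B ∈ s, U • B) :=
    isOpen_biInter_finset fun B hB => (hp.1.1 B (hs hB)).1.smul_left
  obtain ⟨z, hz, hzA⟩ := hd.inter_open_nonempty _ hopen (hp.1.nonempty_biInter_smul hs hU)
  exact ⟨z, ⟨1, hU.2.1, z, hzA, one_smul G z⟩, hz⟩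

theorem biUnion_notMem (hp : IsNearUltrafilter G p) {T : Finset (Set X)}
    (hT : ∀ A ∈ T, IsOpen A ∧ A.Nonempty) (hTp : ∀ A ∈ T, A ∉ p) :
    (⋃ A ∈ T, A) ∉ p := by
  classical
  intro hmem
  choose! s hs U hU hempty using fun A hA =>
    hp.exists_inter_eq_empty_of_notMem (hT A hA).1 (hT A hA).2 (hTp A hA)
  set V := ⋂ A ∈ T, U A
  have hV : IsSymmOpenNhdOne V := IsSymmOpenNhdOne.biInter_finset hU
  have hsub : ↑(insert (⋃ A ∈ T, A) (T.biUnion s)) ⊆ p := by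
    simp only [Finset.coe_insert, Finset.coe_biUnion, insert_subset_iff, iUnion_subset_iff]
    exact ⟨hmem, fun A hA => hs A hA⟩
  obtain ⟨y, hy⟩ := hp.1.2 _ (Finset.insert_nonempty _ _) hsub V hV.1 hV.2.1 hV.2.2
  rw [Finset.set_biInter_insert] at hy
  obtain ⟨⟨v, hv, x, hx, rfl⟩, hy⟩ := hy
  obtain ⟨A, hA, hxA⟩ := mem_iUnion₂.mp hx
  have hVU : V ⊆ U A := biInter_subset_of_mem hA
  refine (hempty A hA).subset ⟨smul_mem_smul (hVU hv) hxA, mem_iInter₂.mpr fun B hB => ?_⟩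
  exact smul_subset_smul_right hVU <|
    mem_iInter₂.mp hy B (Finset.mem_biUnion.mpr ⟨A, hA, hB⟩)

end IsNearUltrafilter

namespace NearUltra

variable {G X : Type*} [Group G] [TopologicalSpace G] [TopologicalSpace X] [MulAction G X]

theorem exists_finset_of_mem_isOpen {W : Set (NearUltra G X)}
    (hW : IsOpen[nearTopology G X] W) {p : NearUltra G X} (hp : p ∈ W) :
    ∃ T : Finset (Set X), (∀ A ∈ T, IsOpen A ∧ A.Nonempty) ∧ (∀ A ∈ T, A ∉ p.1) ∧
      ∀ q : NearUltra G X, (∀ A ∈ T, A ∉ q.1) → q ∈ W := by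
  classical
  induction hW generalizing p with
  | basic N hN =>
    obtain ⟨A, hA, hne, rfl⟩ := hN
    exact ⟨{A}, by simpa using ⟨hA, hne⟩, by simpa using hp, fun q hq => hq A (by simp)⟩
  | univ => exact ⟨∅, by simp, by simp, fun _ _ => trivial⟩
  | inter W₁ W₂ _ _ ih₁ ih₂ =>
    obtain ⟨T₁, hT₁, hT₁p, hT₁W⟩ := ih₁ hp.1
    obtain ⟨T₂, hT₂, hT₂p, hT₂W⟩ := ih₂ hp.2
    refine ⟨T₁ ∪ T₂, Finset.forall_mem_union.mpr ⟨hT₁, hT₂⟩,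
      Finset.forall_mem_union.mpr ⟨hT₁p, hT₂p⟩, fun q hq => ?_⟩
    rw [Finset.forall_mem_union] at hq
    exact ⟨hT₁W q hq.1, hT₂W q hq.2⟩
  | sUnion S _ ih =>
    obtain ⟨W, hWS, hpW⟩ := hp
    obtain ⟨T, hT, hTp, hTW⟩ := ih W hWS hpW
    exact ⟨T, hT, hTp, fun q hq => ⟨W, hWS, hTW q hq⟩⟩

theorem exists_fiber_notMem [IsTopologicalGroup G] [CompactSpace X] [RegularSpace X]
    [ContinuousSMul G X] (π : NearUltra G X → X)
    (hπ : ∀ p : NearUltra G X, ∀ A : Set X, IsOpen A → π p ∈ A → A ∈ p.1)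
    (p : NearUltra G X) {T : Finset (Set X)} (hT : ∀ A ∈ T, IsOpen A ∧ A.Nonempty)
    (hTp : ∀ A ∈ T, A ∉ p.1) :
    ∃ x : X, ∀ q : NearUltra G X, π q = x → ∀ A ∈ T, A ∉ q.1 := by
  have : Nonempty X := ⟨π p⟩
  have hnd : ¬ Dense (⋃ A ∈ T, A) := fun hd => p.2.biUnion_notMem hT hTp
    (p.2.mem_of_dense (isOpen_biUnion fun A hA => (hT A hA).1) hd)
  obtain ⟨x, hx⟩ := not_forall.mp hnd
  obtain ⟨V, ⟨hxV, hV⟩, hVc⟩ := (hasBasis_opens_closure x).mem_iff.mp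
    (isClosed_closure.isOpen_compl.mem_nhds hx)
  refine ⟨x, fun q hq A hA hAq => ?_⟩
  have hAc : closure A ⊆ closure (⋃ A ∈ T, A) :=
    closure_mono fun y hy => mem_iUnion₂.mpr ⟨A, hA, hy⟩
  obtain ⟨U, hU, hd⟩ := exists_isSymmOpenNhdOne_disjoint_smul (G := G)
    isClosed_closure.isCompact isClosed_closure
    (disjoint_left.mpr fun y hyA hyV => hVc hyV (hAc hyA))
  exact q.2.1.notMem_of_disjoint_smul (hπ q V hV (hq ▸ hxV)) hU
    (hd.mono (smul_subset_smul_left subset_closure) (smul_subset_smul_left subset_closure)) hAq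

end NearUltra

theorem nearUltra_proj_highlyProximal_general
    {G X : Type*} [Group G] [TopologicalSpace G] [IsTopologicalGroup G]
    [TopologicalSpace X] [CompactSpace X] [T2Space X]
    [MulAction G X] [ContinuousSMul G X]
    (π : NearUltra G X → X)
    (hπ : ∀ p : NearUltra G X, ∀ A : Set X, IsOpen A → π p ∈ A → A ∈ p.1) :
    ∀ W : Set (NearUltra G X), @IsOpen (NearUltra G X) (nearTopology G X) W →
      W.Nonempty → ∃ x : X, π ⁻¹' {x} ⊆ W := by
  rintro W hW ⟨p, hp⟩
  obtain ⟨T, hT, hTp, hTW⟩ := NearUltra.exists_finset_of_mem_isOpen hW hp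
  obtain ⟨x, hx⟩ := NearUltra.exists_fiber_notMem π hπ p hT hTp
  exact ⟨x, fun q hq => hTW q (hx q hq)⟩

/-- If X is minimal, the canonical map from the space of near ultrafilters
to X is highly proximal: every nonempty open set contains a fiber. -/
theorem nearUltra_proj_highlyProximal
    {G X : Type*} [Group G] [TopologicalSpace G] [IsTopologicalGroup G]
    [TopologicalSpace X] [CompactSpace X] [T2Space X]
    [MulAction G X] [ContinuousSMul G X]
    (hmin : ∀ x : X, Dense (MulAction.orbit G x))
    (π : NearUltra G X → X)
    (hπ : ∀ p : NearUltra G X, ∀ A : Set X, IsOpen A → π p ∈ A → A ∈ p.1) :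
    ∀ W : Set (NearUltra G X), @IsOpen (NearUltra G X) (nearTopology G X) W →
      W.Nonempty → ∃ x : X, π ⁻¹' {x} ⊆ W :=
  nearUltra_proj_highlyProximal_general π hπ
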